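/- Every n-truncated globular set is (n+1)-coskeletal. -/

import Mathlib

open CategoryTheory CategoryTheory.Limits Opposite

/-- Morphisms of the globe category. -/
inductive GlobeHom : ℕ → ℕ → Type where
  | ident (m : ℕ) : GlobeHom m m
  | sig {m n : ℕ} (h : m < n) : GlobeHom m n
  | tau {m n : ℕ} (h : m < n) : GlobeHom m n

/-- Composition in the globe category: determined by the inner factor. -/
def GlobeHom.comp : {a b c : ℕ} → GlobeHom a b → GlobeHom b c → GlobeHom a c
  | _, _, _, .ident _, g => g
  | _, _, _, .sig h, .ident _ => .sig h
  | _, _, _, .sig h, .sig h' => .sig (h.trans h')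
  | _, _, _, .sig h, .tau h' => .sig (h.trans h')
  | _, _, _, .tau h, .ident _ => .tau h
  | _, _, _, .tau h, .sig h' => .tau (h.trans h')
  | _, _, _, .tau h, .tau h' => .tau (h.trans h')

lemma GlobeHom.comp_assoc : ∀ {a b c d : ℕ} (f : GlobeHom a b) (g : GlobeHom b c)
    (h : GlobeHom c d), (f.comp g).comp h = f.comp (g.comp h) := by
  intro a b c d f g h
  cases f <;> cases g <;> cases h <;> rfl

lemma GlobeHom.le : ∀ {a b : ℕ}, GlobeHom a b → a ≤ b
  | _, _, .ident _ => le_rfl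
  | _, _, .sig h => h.le
  | _, _, .tau h => h.le

/-- The globe category `G`: objects are natural numbers. -/
def Globe : Type := ℕ

instance : Category Globe where
  Hom m n := GlobeHom m n
  id m := GlobeHom.ident m
  comp f g := f.comp g
  id_comp _ := rfl
  comp_id := by rintro _ _ (_|_|_) <;> rfl
  assoc f g h := GlobeHom.comp_assoc f g h

/-- The object of `Globe` corresponding to `k : ℕ`. -/
def gl (k : ℕ) : Globe := k

/-- The underlying natural number of an object of `Globe`. -/
def gval (m : Globe) : ℕ := m

/-- Globular sets: presheaves on the globe category. -/
abbrev GlobSet := Globeᵒᵖ ⥤ Type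

/-- The source map `X_{k+1} → X_k` of a globular set. -/
def gsrc (X : GlobSet) (k : ℕ) : X.obj (op (gl (k+1))) → X.obj (op (gl k)) :=
  X.map (Quiver.Hom.op (show gl k ⟶ gl (k+1) from GlobeHom.sig (Nat.lt_succ_self k)))

/-- The target map `X_{k+1} → X_k` of a globular set. -/
def gtgt (X : GlobSet) (k : ℕ) : X.obj (op (gl (k+1))) → X.obj (op (gl k)) :=
  X.map (Quiver.Hom.op (show gl k ⟶ gl (k+1) from GlobeHom.tau (Nat.lt_succ_self k)))

/-- Two `k`-cells are parallel if `k = 0` or they have the same source and target. -/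
def Parallel (X : GlobSet) : (k : ℕ) → X.obj (op (gl k)) → X.obj (op (gl k)) → Prop
  | 0, _, _ => True
  | (k+1), x, y => gsrc X k x = gsrc X k y ∧ gtgt X k x = gtgt X k y

/-- The full subcategory `G_n` of the globe category on objects `≤ n`. -/
def GlobeLE (n : ℕ) := ObjectProperty.FullSubcategory (fun m : Globe => gval m ≤ n)

instance (n : ℕ) : Category (GlobeLE n) := ObjectProperty.FullSubcategory.category _

/-- The inclusion `ι_n : G_n ⥤ G`. -/
def iotaGlobe (n : ℕ) : GlobeLE n ⥤ Globe := ObjectProperty.ι _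

/-- A morphism of globes coming from an equality of dimensions. -/
def GlobeHom.ofEq : {a b : ℕ} → a = b → GlobeHom a b
  | _, _, rfl => .ident _

/-- A tag distinguishing the three kinds of globe morphisms. -/
def GlobeHom.tag : {a b : ℕ} → GlobeHom a b → ℕ
  | _, _, .ident _ => 0
  | _, _, .sig _ => 1
  | _, _, .tau _ => 2

lemma GlobeHom.ext_tag : ∀ {a b : ℕ} (f g : GlobeHom a b), f.tag = g.tag → f = g := by
  intro a b f g h
  cases f <;> cases g <;> simp_all [GlobeHom.tag]

lemma GlobeHom.tag_comp : ∀ {a b c : ℕ} (f : GlobeHom a b) (g : GlobeHom b c),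
    (f.comp g).tag = if f.tag = 0 then g.tag else f.tag := by
  intro a b c f g
  cases f <;> cases g <;> simp [GlobeHom.comp, GlobeHom.tag]

lemma GlobeHom.tag_ofEq {a b : ℕ} (h : a = b) : (GlobeHom.ofEq h).tag = 0 := by
  cases h; rfl

/-- The truncation of a globe morphism. -/
def GlobeHom.trunc (n : ℕ) : {a b : ℕ} → GlobeHom a b → GlobeHom (min a n) (min b n)
  | _, _, .ident m => .ident _
  | a, b, .sig h => if h' : min a n < min b n then .sig h' else .ofEq (by omega)
  | a, b, .tau h => if h' : min a n < min b n then .tau h' else .ofEq (by omega)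

lemma GlobeHom.tag_trunc (n : ℕ) : ∀ {a b : ℕ} (f : GlobeHom a b),
    (f.trunc n).tag = if min a n < min b n then f.tag else 0 := by
  intro a b f
  cases f with
  | ident => simp [GlobeHom.trunc, GlobeHom.tag]
  | sig h =>
      rw [GlobeHom.trunc]
      split
      · simp_all [GlobeHom.tag]
      · rw [GlobeHom.tag_ofEq]
  | tau h =>
      rw [GlobeHom.trunc]
      split
      · simp_all [GlobeHom.tag]
      · rw [GlobeHom.tag_ofEq]

/-- The truncation functor `t_n : G ⥤ G_n`. -/
def truncFunctor (n : ℕ) : Globe ⥤ GlobeLE n where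
  obj k := ⟨gl (min (gval k) n), min_le_right _ _⟩
  map {a b} f := InducedCategory.homMk (GlobeHom.trunc n f)
  map_id _ := rfl
  map_comp {a b c} f g := by
    apply ObjectProperty.hom_ext
    apply GlobeHom.ext_tag
    have hab := GlobeHom.le f
    have hbc := GlobeHom.le g
    show ((f.comp g).trunc n).tag = ((f.trunc n).comp (g.trunc n)).tag
    erw [GlobeHom.tag_trunc, GlobeHom.tag_comp, GlobeHom.tag_comp, GlobeHom.tag_trunc,
      GlobeHom.tag_trunc]
    revert a b c
    intro (a : ℕ) (b : ℕ) (c : ℕ) (f : GlobeHom a b) (g : GlobeHom b c) hab hbc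
    cases f <;> cases g <;> simp [GlobeHom.tag] <;> split_ifs <;> omega

/-- The precomposition functor `t_n^*`. -/
def tStar (n : ℕ) : ((GlobeLE n)ᵒᵖ ⥤ Type) ⥤ GlobSet :=
  (Functor.whiskeringLeft _ _ _).obj (truncFunctor n).op

/-- The left Kan extension functor `t_{n!}`, left adjoint of `t_n^*`. -/
noncomputable def tLan (n : ℕ) : GlobSet ⥤ ((GlobeLE n)ᵒᵖ ⥤ Type) :=
  (truncFunctor n).op.lan

/-- The adjunction `t_{n!} ⊣ t_n^*`. -/
noncomputable def tAdj (n : ℕ) : tLan n ⊣ tStar n :=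
  Functor.lanAdjunction _ _

/-- A globular set is `n`-truncated if the unit of `t_{n!} ⊣ t_n^*` is an isomorphism at it. -/
def IsTruncated (n : ℕ) (X : GlobSet) : Prop := IsIso ((tAdj n).unit.app X)

/-- The restriction functor `ι_n^*`. -/
def iotaStar (n : ℕ) : GlobSet ⥤ ((GlobeLE n)ᵒᵖ ⥤ Type) :=
  (Functor.whiskeringLeft _ _ _).obj (iotaGlobe n).op

/-- The right Kan extension functor `ι_{n*}`, right adjoint of `ι_n^*`. -/
noncomputable def iotaRan (n : ℕ) : ((GlobeLE n)ᵒᵖ ⥤ Type) ⥤ GlobSet :=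
  (iotaGlobe n).op.ran

/-- The adjunction `ι_n^* ⊣ ι_{n*}`. -/
noncomputable def iotaAdj (n : ℕ) : iotaStar n ⊣ iotaRan n :=
  Functor.ranAdjunction _ _

/-- A globular set is `n`-coskeletal if the unit of `ι_n^* ⊣ ι_{n*}` is an isomorphism at it. -/
def IsCoskeletal (n : ℕ) (X : GlobSet) : Prop := IsIso ((iotaAdj n).unit.app X)

/-- The representable globular set `D_k`. -/
def disk (k : ℕ) : GlobSet := yoneda.obj (gl k)

/-- The boundary `∂D_k` of the `k`-disk. -/
def boundary (k : ℕ) : GlobSet where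
  obj m := { f : GlobeHom (gval m.unop) k // gval m.unop < k }
  map {m m'} g := TypeCat.ofHom fun f => ⟨GlobeHom.comp g.unop f.1, lt_of_le_of_lt (GlobeHom.le g.unop) f.2⟩
  map_id m := by ext f; rfl
  map_comp {m m' m''} g h := by
    ext f; first | exact Subtype.ext (GlobeHom.comp_assoc h.unop g.unop f.1) | exact GlobeHom.comp_assoc h.unop g.unop f.1

/-- The boundary inclusion `∂D_k ⟶ D_k`. -/
def boundaryIncl (k : ℕ) : boundary k ⟶ disk k where
  app m := TypeCat.ofHom fun f => f.1
  naturality m m' g := by ext f; rfl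


/-!
An `n`-truncated `X` is isomorphic to `t_n^* Z` with `Z = t_{n!} X`, and coskeletality is
invariant under isomorphism, so it suffices that every map `g : ι^* Y ⟶ ι^* (t_n^* Z)` of
`(n+1)`-globular sets extends uniquely to `Y ⟶ t_n^* Z`. Since `(t_n^* Z)_k = Z_{min k n}`, the
only candidate sends a `k`-cell `y` to `g` of its `(min k n)`-dimensional source face. This is
natural because `g` cannot tell the source and target `n`-faces of a cell of dimension `> n`
apart: both are faces of one `(n+1)`-cell, and `t_n` identifies `σ^{n+1}_n` with `τ^{n+1}_n`.
-/

lemma CategoryTheory.Adjunction.isIso_unit_app_of_bijective_map {C D : Type*} [Category C]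
    [Category D] {L : C ⥤ D} {R : D ⥤ C} (adj : L ⊣ R) {X : C}
    (hX : ∀ Y : C, Function.Bijective (fun f : Y ⟶ X => L.map f)) :
    IsIso (adj.unit.app X) := by
  apply isIso_of_yoneda_map_bijective
  intro T
  dsimp only [Functor.id_obj, Functor.comp_obj]
  convert (adj.homEquiv T (L.obj X)).bijective.comp (hX T) using 1
  funext f
  rw [Function.comp_apply, Adjunction.homEquiv_unit]
  exact adj.unit.naturality f

@[simp]
lemma gval_gl (k : ℕ) : gval (gl k) = k := rfl

lemma GlobeHom.eq_ident {a : ℕ} (u : GlobeHom a a) : u = .ident a := by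
  cases u with
  | ident => rfl
  | sig h => exact absurd h (lt_irrefl a)
  | tau h => exact absurd h (lt_irrefl a)

namespace Globe

def sigma {m k : ℕ} (h : m < k) : gl m ⟶ gl k := GlobeHom.sig h

def tau {m k : ℕ} (h : m < k) : gl m ⟶ gl k := GlobeHom.tau h

def minSigma (n k : ℕ) : gl (min k n) ⟶ gl k :=
  if h : min k n < k then GlobeHom.sig h else GlobeHom.ofEq (show min k n = k by omega)

@[simp]
lemma tag_minSigma (n k : ℕ) :
    GlobeHom.tag (minSigma n k) = if min k n < k then 1 else 0 := by
  unfold minSigma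
  split
  · rfl
  · exact GlobeHom.tag_ofEq _

@[simp]
lemma tag_comp {a b c : Globe} (f : a ⟶ b) (g : b ⟶ c) :
    GlobeHom.tag (f ≫ g) = if GlobeHom.tag f = 0 then GlobeHom.tag g else GlobeHom.tag f :=
  GlobeHom.tag_comp f g

end Globe

namespace GlobeLE

variable {n : ℕ}

def of {m : ℕ} (h : m ≤ n) : GlobeLE n := ⟨gl m, h⟩

lemma hom_ext_tag {A B : GlobeLE n} {f g : A ⟶ B}
    (h : GlobeHom.tag f.hom = GlobeHom.tag g.hom) : f = g :=
  InducedCategory.hom_ext (GlobeHom.ext_tag _ _ h)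

lemma endo_eq_id {A : GlobeLE n} (u : A ⟶ A) : u = 𝟙 A :=
  InducedCategory.hom_ext (GlobeHom.eq_ident u.hom)

@[simp]
lemma tag_comp {A B C : GlobeLE n} (f : A ⟶ B) (g : B ⟶ C) :
    GlobeHom.tag (f ≫ g).hom =
      if GlobeHom.tag f.hom = 0 then GlobeHom.tag g.hom else GlobeHom.tag f.hom :=
  GlobeHom.tag_comp f.hom g.hom

@[simp]
lemma tag_eqToHom {A B : GlobeLE n} (h : A = B) : GlobeHom.tag (eqToHom h).hom = 0 := by
  subst h; rfl

@[simp]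
lemma tag_truncFunctor_map {a b : Globe} (f : a ⟶ b) :
    GlobeHom.tag ((truncFunctor n).map f).hom =
      if min (gval a) n < min (gval b) n then GlobeHom.tag f else 0 :=
  GlobeHom.tag_trunc n f

end GlobeLE

@[simp]
lemma gval_truncFunctor_obj (n : ℕ) (a : Globe) :
    gval ((truncFunctor n).obj a).obj = min (gval a) n := rfl

lemma truncFunctor_obj_min (n k : ℕ) :
    (truncFunctor n).obj (gl (min k n)) = (truncFunctor n).obj (gl k) := by
  show (⟨gl (min (min k n) n), _⟩ : GlobeLE n) = ⟨gl (min k n), _⟩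
  congr 2
  omega

section TruncFunctor

variable {n : ℕ}

lemma truncFunctor_map_minSigma_comp {a b : ℕ} (φ : gl b ⟶ gl a) :
    (truncFunctor n).map (Globe.minSigma n b ≫ φ) =
      (truncFunctor n).map (((truncFunctor n).map φ).hom ≫ Globe.minSigma n a) := by
  apply GlobeLE.hom_ext_tag
  erw [GlobeLE.tag_truncFunctor_map, GlobeLE.tag_truncFunctor_map, Globe.tag_comp,
    Globe.tag_comp, GlobeLE.tag_truncFunctor_map, Globe.tag_minSigma, Globe.tag_minSigma]
  simp only [gval_gl, gval_truncFunctor_obj]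
  change GlobeHom b a at φ
  cases φ <;> simp only [GlobeHom.tag] <;> grind

lemma truncFunctor_map_comp_eqToHom {a b : ℕ} (φ : gl b ⟶ gl a) :
    (truncFunctor n).map φ ≫ eqToHom (truncFunctor_obj_min n a).symm =
      eqToHom (truncFunctor_obj_min n b).symm ≫
        (truncFunctor n).map ((truncFunctor n).map φ).hom := by
  apply GlobeLE.hom_ext_tag
  erw [GlobeLE.tag_comp, GlobeLE.tag_comp, GlobeLE.tag_eqToHom, GlobeLE.tag_eqToHom,
    GlobeLE.tag_truncFunctor_map, GlobeLE.tag_truncFunctor_map, GlobeLE.tag_truncFunctor_map]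
  simp only [gval_gl, gval_truncFunctor_obj]
  change GlobeHom b a at φ
  cases φ <;> simp only [GlobeHom.tag] <;> grind

variable (Z : (GlobeLE n)ᵒᵖ ⥤ Type)

lemma map_truncFunctor_map_map_eqToHom {a b : ℕ} (φ : gl b ⟶ gl a)
    (x : Z.obj (op ((truncFunctor n).obj (gl (min a n))))) :
    Z.map ((truncFunctor n).map φ).op (Z.map (eqToHom (truncFunctor_obj_min n a).symm).op x) =
      Z.map (eqToHom (truncFunctor_obj_min n b).symm).op
        (Z.map ((truncFunctor n).map ((truncFunctor n).map φ).hom).op x) := by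
  rw [← Functor.map_comp_apply, ← op_comp, truncFunctor_map_comp_eqToHom]
  exact Functor.map_comp_apply Z _ _ x

lemma map_eqToHom_map_truncFunctor_map_minSigma (k : ℕ)
    (x : Z.obj (op ((truncFunctor n).obj (gl k)))) :
    Z.map (eqToHom (truncFunctor_obj_min n k).symm).op
      (Z.map ((truncFunctor n).map (Globe.minSigma n k)).op x) = x := by
  rw [← Functor.map_comp_apply, ← op_comp, GlobeLE.endo_eq_id (eqToHom _ ≫ _), op_id]
  exact Functor.map_id_apply Z _ x

end TruncFunctor

section Extension

variable {n : ℕ} {Z : (GlobeLE n)ᵒᵖ ⥤ Type} {Y : GlobSet}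
  (g : (iotaStar (n + 1)).obj Y ⟶ (iotaStar (n + 1)).obj ((tStar n).obj Z))

lemma app_map_sigma_eq_app_map_tau {k : ℕ} (hk : n < k) (y : Y.obj (op (gl k))) :
    g.app (op (GlobeLE.of n.le_succ)) (Y.map (Globe.sigma hk).op y) =
      g.app (op (GlobeLE.of n.le_succ)) (Y.map (Globe.tau hk).op y) := by
  let χ : gl (n + 1) ⟶ gl k :=
    if h : n + 1 < k then Globe.sigma h else GlobeHom.ofEq (show n + 1 = k by omega)
  let σ := Globe.sigma n.lt_succ_self
  let τ := Globe.tau n.lt_succ_self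
  have hσ : σ ≫ χ = Globe.sigma hk := GlobeHom.ext_tag _ _ (by rw [Globe.tag_comp]; rfl)
  have hτ : τ ≫ χ = Globe.tau hk := GlobeHom.ext_tag _ _ (by rw [Globe.tag_comp]; rfl)
  have hστ : (truncFunctor n).map σ = (truncFunctor n).map τ :=
    GlobeLE.hom_ext_tag (by simp [σ, τ])
  rw [← hσ, ← hτ, op_comp, op_comp, Functor.map_comp_apply, Functor.map_comp_apply]
  erw [NatTrans.naturality_apply g
      (InducedCategory.homMk σ : GlobeLE.of n.le_succ ⟶ GlobeLE.of le_rfl).op,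
    NatTrans.naturality_apply g
      (InducedCategory.homMk τ : GlobeLE.of n.le_succ ⟶ GlobeLE.of le_rfl).op]
  exact congrArg (fun u => Z.map u.op _) hστ

lemma app_map_eq_of_truncFunctor_map_eq {m k : ℕ} (hm : m ≤ n) {ψ ψ' : gl m ⟶ gl k}
    (h : (truncFunctor n).map ψ = (truncFunctor n).map ψ') (y : Y.obj (op (gl k))) :
    g.app (op (GlobeLE.of (hm.trans n.le_succ))) (Y.map ψ.op y) =
      g.app (op (GlobeLE.of (hm.trans n.le_succ))) (Y.map ψ'.op y) := by
  have htag := congrArg (fun u => GlobeHom.tag u.hom) h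
  simp only [GlobeLE.tag_truncFunctor_map, gval_gl] at htag
  change GlobeHom m k at ψ ψ'
  cases ψ <;> cases ψ' <;> simp only [GlobeHom.tag] at htag
  all_goals first
    | rfl
    | omega
    | obtain rfl : m = n := by by_cases hlt : min m n < min k n <;> simp [hlt] at htag; omega
  · exact app_map_sigma_eq_app_map_tau g _ y
  · exact (app_map_sigma_eq_app_map_tau g _ y).symm

def truncExtendApp (k : ℕ) : Y.obj (op (gl k)) ⟶ ((tStar n).obj Z).obj (op (gl k)) :=
  TypeCat.ofHom fun y => Z.map (eqToHom (truncFunctor_obj_min n k).symm).op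
    (g.app (op (GlobeLE.of ((min_le_right k n).trans n.le_succ)))
      (Y.map (Globe.minSigma n k).op y))

lemma truncExtendApp_naturality {a b : ℕ} (φ : gl b ⟶ gl a) (y : Y.obj (op (gl a))) :
    truncExtendApp g b (Y.map φ.op y) =
      ((tStar n).obj Z).map φ.op (truncExtendApp g a y) := by
  let A : GlobeLE (n + 1) := GlobeLE.of ((min_le_right a n).trans n.le_succ)
  let B : GlobeLE (n + 1) := GlobeLE.of ((min_le_right b n).trans n.le_succ)
  let ψ : B ⟶ A := InducedCategory.homMk ((truncFunctor n).map φ).hom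
  have hrhs : ((tStar n).obj Z).map φ.op (truncExtendApp g a y) =
      Z.map (eqToHom (truncFunctor_obj_min n b).symm).op
        (Z.map ((truncFunctor n).map ψ.hom).op
          (g.app (op A) (Y.map (Globe.minSigma n a).op y))) :=
    map_truncFunctor_map_map_eqToHom Z φ _
  rw [hrhs]
  change Z.map _ (g.app (op B) (Y.map (Globe.minSigma n b).op (Y.map φ.op y))) = _
  rw [← Functor.map_comp_apply, ← op_comp,
    app_map_eq_of_truncFunctor_map_eq g (min_le_right b n) (truncFunctor_map_minSigma_comp φ)]
  erw [op_comp, Functor.map_comp_apply, NatTrans.naturality_apply g ψ.op]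
  rfl

def truncExtend : Y ⟶ (tStar n).obj Z where
  app m := truncExtendApp g (gval m.unop)
  naturality _ _ u := by
    ext y
    exact truncExtendApp_naturality g u.unop y

lemma iotaStar_map_truncExtend : (iotaStar (n + 1)).map (truncExtend g) = g := by
  ext ⟨⟨m, hm⟩⟩ y
  have hnat := NatTrans.naturality_apply g
    (InducedCategory.homMk (Globe.minSigma n (gval m)) :
      GlobeLE.of ((min_le_right (gval m) n).trans n.le_succ) ⟶ ⟨m, hm⟩).op y
  change truncExtendApp g (gval m) y = _
  erw [TypeCat.ofHom_apply, hnat]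
  exact map_eqToHom_map_truncFunctor_map_minSigma Z (gval m) _

omit g in
lemma truncExtend_iotaStar_map (f : Y ⟶ (tStar n).obj Z) :
    truncExtend ((iotaStar (n + 1)).map f) = f := by
  ext ⟨m⟩ y
  change truncExtendApp _ (gval m) y = _
  erw [TypeCat.ofHom_apply, NatTrans.naturality_apply f (Globe.minSigma n (gval m)).op y]
  exact map_eqToHom_map_truncFunctor_map_minSigma Z (gval m) _

end Extension

theorem isCoskeletal_tStar_obj (n : ℕ) (Z : (GlobeLE n)ᵒᵖ ⥤ Type) :
    IsCoskeletal (n + 1) ((tStar n).obj Z) :=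
  (iotaAdj (n + 1)).isIso_unit_app_of_bijective_map fun _ =>
    Function.bijective_iff_has_inverse.mpr
      ⟨truncExtend, truncExtend_iotaStar_map, iotaStar_map_truncExtend⟩

/-- Every `n`-truncated globular set is `(n+1)`-coskeletal. -/
theorem statement7 (n : ℕ) (X : GlobSet) (h : IsTruncated n X) :
    IsCoskeletal (n + 1) X := by
  have : IsIso ((tAdj n).unit.app X) := h
  exact (NatTrans.isIso_app_iff_of_iso _ (asIso ((tAdj n).unit.app X))).mpr
    (isCoskeletal_tStar_obj n _)
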